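/- The function u : ℝ³ → ℝ defined by u(x, y, t) = (x² + y²)eᵗ + (1/4)e^{−t} − eᵗ is 2-convex and satisfies σ₂(D²u) = 1 at every point of ℝ³; moreover u does not satisfy quadratic growth (in particular u is not a quadratic polynomial). -/

import Mathlib

open scoped BigOperators

noncomputable section

/-- The Hessian matrix of `u` at `x`, whose `(i,j)` entry is the second partial
derivative `∂ᵢ∂ⱼ u (x)`. -/
def Hess {n : ℕ} (u : EuclideanSpace ℝ (Fin n) → ℝ) (x : EuclideanSpace ℝ (Fin n)) :
    Matrix (Fin n) (Fin n) ℝ :=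
  fun i j => iteratedFDeriv ℝ 2 u x ![EuclideanSpace.single i 1, EuclideanSpace.single j 1]

/-- `σ₁` of a (symmetric) matrix: the first elementary symmetric function of its
eigenvalues, i.e. the trace. -/
def sigma1M {n : ℕ} (M : Matrix (Fin n) (Fin n) ℝ) : ℝ := M.trace

/-- `σ₂` of a (symmetric) matrix: the second elementary symmetric function of its
eigenvalues, computed by Newton's identity. -/
def sigma2M {n : ℕ} (M : Matrix (Fin n) (Fin n) ℝ) : ℝ :=
  (M.trace ^ 2 - (M * M).trace) / 2

/-- `σ₃` of a (symmetric) matrix: the third elementary symmetric function of its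
eigenvalues, computed by Newton's identity. -/
def sigma3M {n : ℕ} (M : Matrix (Fin n) (Fin n) ℝ) : ℝ :=
  (M.trace ^ 3 - 3 * M.trace * (M * M).trace + 2 * (M * M * M).trace) / 6

/-- `u` is 2-convex: the eigenvalue vector of its Hessian lies in the Gårding cone `Γ₂`,
i.e. `σ₁(D²u) > 0` and `σ₂(D²u) > 0` everywhere. -/
def TwoConvex {n : ℕ} (u : EuclideanSpace ℝ (Fin n) → ℝ) : Prop :=
  ∀ x, 0 < sigma1M (Hess u x) ∧ 0 < sigma2M (Hess u x)

/-- `u` satisfies quadratic growth. -/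
def QuadGrowth {n : ℕ} (u : EuclideanSpace ℝ (Fin n) → ℝ) : Prop :=
  ∃ b > (0:ℝ), ∃ c > (0:ℝ), ∃ R > (0:ℝ), ∀ x, R ≤ ‖x‖ → b * ‖x‖ ^ 2 - c ≤ u x
/-- Warren's example: `u(x,y,t) = (x²+y²)eᵗ + (1/4)e⁻ᵗ - eᵗ`. -/
def uWarren : EuclideanSpace ℝ (Fin 3) → ℝ :=
  fun p => (p 0 ^ 2 + p 1 ^ 2) * Real.exp (p 2) + (1/4) * Real.exp (-(p 2)) - Real.exp (p 2)

/-!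
The Hessian is explicit: its trace is `(3 + x² + y²)eᵗ + e⁻ᵗ/4 > 0`, and in `σ₂` all terms cancel
except `eᵗ · e⁻ᵗ = 1`. On the `t`-axis `u = e⁻ᵗ/4 - eᵗ`, which is `≤ 0` for `t ≥ 0`, ruling out
quadratic growth; its third finite difference `(e⁻¹ - 1)³/4 - (e - 1)³` is negative, whereas the
third differences of a quadratic polynomial vanish.
-/

open Real

theorem Hess_eq_of_hasFDerivAt {n : ℕ} {u : EuclideanSpace ℝ (Fin n) → ℝ}
    {u' : EuclideanSpace ℝ (Fin n) → EuclideanSpace ℝ (Fin n) →L[ℝ] ℝ}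
    {u'' : EuclideanSpace ℝ (Fin n) →L[ℝ] EuclideanSpace ℝ (Fin n) →L[ℝ] ℝ}
    {x : EuclideanSpace ℝ (Fin n)} (hu : ∀ y, HasFDerivAt u (u' y) y)
    (hu' : HasFDerivAt u' u'' x) (i j : Fin n) :
    Hess u x i j = u'' (EuclideanSpace.single i 1) (EuclideanSpace.single j 1) := by
  have hfd : fderiv ℝ u = u' := funext fun y => (hu y).fderiv
  simp only [Hess, iteratedFDeriv_two_apply, hfd, hu'.fderiv]
  rfl

theorem sigma2M_fin_three (M : Matrix (Fin 3) (Fin 3) ℝ) :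
    sigma2M M = M 0 0 * M 1 1 - M 0 1 * M 1 0 + M 0 0 * M 2 2 - M 0 2 * M 2 0
      + M 1 1 * M 2 2 - M 1 2 * M 2 1 := by
  simp only [sigma2M, Matrix.trace_fin_three, Matrix.mul_apply, Fin.sum_univ_three]
  ring

theorem not_quadGrowth_of_bddAbove_along_unbounded {n : ℕ} {u : EuclideanSpace ℝ (Fin n) → ℝ}
    {C : ℝ} (h : ∀ r, ∃ x, r ≤ ‖x‖ ∧ u x ≤ C) : ¬ QuadGrowth u := by
  rintro ⟨b, hb, c, -, R, -, hgrowth⟩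
  obtain ⟨x, hx, hux⟩ := h (max R (max 1 ((c + C + 1) / b)))
  have hx1 : 1 ≤ ‖x‖ := le_trans (le_max_left _ _) (le_trans (le_max_right _ _) hx)
  have hxb : (c + C + 1) / b ≤ ‖x‖ := le_trans (le_max_right _ _) (le_trans (le_max_right _ _) hx)
  have hlin : c + C + 1 ≤ b * ‖x‖ := by rwa [div_le_iff₀' hb] at hxb
  have hsq : b * ‖x‖ ≤ b * ‖x‖ ^ 2 := by gcongr; exact le_self_pow₀ hx1 two_ne_zero
  linarith [hgrowth x (le_trans (le_max_left _ _) hx)]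

theorem quadratic_apply_single {n : ℕ} (B : Matrix (Fin n) (Fin n) ℝ) (p : Fin n → ℝ) (q : ℝ)
    (i : Fin n) (t : ℝ) :
    (1/2) * (∑ j, B.mulVec (EuclideanSpace.single i t) j * (EuclideanSpace.single i t) j)
      + (∑ j, p j * (EuclideanSpace.single i t) j) + q = B i i / 2 * t ^ 2 + p i * t + q := by
  simp only [Matrix.mulVec, dotProduct, PiLp.single_apply, mul_ite, mul_zero, Finset.sum_ite_eq',
    Finset.mem_univ, if_true]
  ring

def thirdDiff (g : ℝ → ℝ) : ℝ := g 3 - 3 * g 2 + 3 * g 1 - g 0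

theorem thirdDiff_quadratic (a b c : ℝ) : thirdDiff (fun t => a * t ^ 2 + b * t + c) = 0 := by
  simp only [thirdDiff]
  ring

theorem thirdDiff_exp_sub_exp (a b : ℝ) :
    thirdDiff (fun t => a * exp (-t) - b * exp t)
      = a * (exp (-1) - 1) ^ 3 - b * (exp 1 - 1) ^ 3 := by
  have e2 : exp 2 = exp 1 ^ 2 := by rw [← exp_nat_mul]; norm_num
  have e3 : exp 3 = exp 1 ^ 3 := by rw [← exp_nat_mul]; norm_num
  have e2' : exp (-2) = exp (-1) ^ 2 := by rw [← exp_nat_mul]; norm_num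
  have e3' : exp (-3) = exp (-1) ^ 3 := by rw [← exp_nat_mul]; norm_num
  simp only [thirdDiff, neg_zero, exp_zero]
  rw [e2, e3, e2', e3']
  ring

theorem thirdDiff_exp_sub_exp_neg {a b : ℝ} (ha : 0 ≤ a) (hb : 0 < b) :
    thirdDiff (fun t => a * exp (-t) - b * exp t) < 0 := by
  have hneg : exp (-1) - 1 ≤ 0 := by linarith [exp_le_one_iff.mpr (by norm_num : (-1 : ℝ) ≤ 0)]
  have hpos : 0 < exp 1 - 1 := by linarith [add_one_lt_exp one_ne_zero]
  rw [thirdDiff_exp_sub_exp]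
  linarith [mul_nonpos_of_nonneg_of_nonpos ha (Odd.pow_nonpos (by decide : Odd 3) hneg),
    mul_pos hb (pow_pos hpos 3)]

local notation "ℝ³" => EuclideanSpace ℝ (Fin 3)

def gradWarren (p : ℝ³) : ℝ³ →L[ℝ] ℝ :=
  (2 * p 0 * exp (p 2)) • EuclideanSpace.proj 0
    + (2 * p 1 * exp (p 2)) • EuclideanSpace.proj 1
    + ((p 0 ^ 2 + p 1 ^ 2) * exp (p 2) - 1 / 4 * exp (-p 2) - exp (p 2)) •
        EuclideanSpace.proj 2

def hessWarren (p : ℝ³) : Matrix (Fin 3) (Fin 3) ℝ :=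
  !![2 * exp (p 2), 0, 2 * p 0 * exp (p 2);
     0, 2 * exp (p 2), 2 * p 1 * exp (p 2);
     2 * p 0 * exp (p 2), 2 * p 1 * exp (p 2),
       (p 0 ^ 2 + p 1 ^ 2) * exp (p 2) + 1 / 4 * exp (-p 2) - exp (p 2)]

theorem hasFDerivAt_uWarren (p : ℝ³) :
    HasFDerivAt uWarren (gradWarren p) p := by
  have hx (i : Fin 3) := PiLp.hasFDerivAt_apply (𝕜 := ℝ) 2 p i
  have hexp := (hx 2).exp
  have hu := (((((hx 0).pow 2).add ((hx 1).pow 2)).mul hexp).add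
    ((hx 2).neg.exp.const_mul (1 / 4))).sub hexp
  refine hu.congr_fderiv ?_
  ext v
  simp only [gradWarren, Pi.add_apply, Pi.neg_apply, Nat.add_one_sub_one, pow_one, nsmul_eq_mul,
    add_apply, sub_apply, smul_apply, neg_apply, PiLp.proj_apply, smul_eq_mul]
  ring

theorem Hess_uWarren (p : ℝ³) : Hess uWarren p = hessWarren p := by
  have hx (i : Fin 3) := PiLp.hasFDerivAt_apply (𝕜 := ℝ) 2 p i
  have hexp := (hx 2).exp
  have hgrad :=
    (((((hx 0).const_mul 2).mul hexp).smul_const (EuclideanSpace.proj 0 : ℝ³ →L[ℝ] ℝ)).add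
      ((((hx 1).const_mul 2).mul hexp).smul_const (EuclideanSpace.proj 1 : ℝ³ →L[ℝ] ℝ))).add
      (((((((hx 0).pow 2).add ((hx 1).pow 2)).mul hexp).sub
        ((hx 2).neg.exp.const_mul (1 / 4))).sub hexp).smul_const
          (EuclideanSpace.proj 2 : ℝ³ →L[ℝ] ℝ))
  ext i j
  rw [Hess_eq_of_hasFDerivAt hasFDerivAt_uWarren hgrad]
  fin_cases i <;> fin_cases j <;> simp [hessWarren] <;> ring

theorem sigma1M_hessWarren_pos (p : ℝ³) : 0 < sigma1M (hessWarren p) := by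
  have h : sigma1M (hessWarren p) =
      (3 + p 0 ^ 2 + p 1 ^ 2) * exp (p 2) + 1 / 4 * exp (-p 2) := by
    simp only [sigma1M, hessWarren, Matrix.trace_fin_three, Matrix.of_apply, Matrix.cons_val',
      Matrix.cons_val_zero, Matrix.cons_val_fin_one, Matrix.cons_val_one, Matrix.cons_val]
    ring
  rw [h]
  positivity

theorem sigma2M_hessWarren (p : ℝ³) : sigma2M (hessWarren p) = 1 := by
  have h : exp (-p 2) * exp (p 2) = 1 := by rw [← exp_add, neg_add_cancel, exp_zero]
  rw [sigma2M_fin_three]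
  simp only [hessWarren, Matrix.of_apply, Matrix.cons_val', Matrix.cons_val_zero,
    Matrix.cons_val_fin_one, Matrix.cons_val_one, Matrix.cons_val]
  linear_combination h

theorem uWarren_single_two (t : ℝ) :
    uWarren (EuclideanSpace.single 2 t) = 1 / 4 * exp (-t) - exp t := by
  simp [uWarren]

/-- Warren's example is a 2-convex entire solution of `σ₂(D²u) = 1` in ℝ³ which does
not satisfy quadratic growth; in particular it is not a quadratic polynomial. -/
theorem warren_example :
    TwoConvex uWarren ∧
    (∀ x, sigma2M (Hess uWarren x) = 1) ∧
    ¬ QuadGrowth uWarren ∧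
    ¬ ∃ (B : Matrix (Fin 3) (Fin 3) ℝ) (p : Fin 3 → ℝ) (q : ℝ), B.IsSymm ∧
        ∀ x, uWarren x = (1/2) * (∑ i, B.mulVec x i * x i) + (∑ i, p i * x i) + q := by
  refine ⟨fun x => ?_, fun x => ?_, ?_, ?_⟩
  · rw [Hess_uWarren, sigma2M_hessWarren]
    exact ⟨sigma1M_hessWarren_pos x, one_pos⟩
  · rw [Hess_uWarren, sigma2M_hessWarren]
  · refine not_quadGrowth_of_bddAbove_along_unbounded (C := 0) fun r =>
      ⟨EuclideanSpace.single 2 |r|, ?_, ?_⟩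
    · simp [le_abs_self]
    · rw [uWarren_single_two]
      linarith [exp_le_one_iff.mpr (neg_nonpos.mpr (abs_nonneg r)), one_le_exp (abs_nonneg r)]
  · rintro ⟨B, p, q, -, h⟩
    have haxis : (fun t => 1 / 4 * exp (-t) - 1 * exp t) =
        fun t => B 2 2 / 2 * t ^ 2 + p 2 * t + q := by
      funext t
      rw [one_mul, ← uWarren_single_two, h, quadratic_apply_single]
    have hdiff := congrArg thirdDiff haxis
    rw [thirdDiff_quadratic] at hdiff
    exact (thirdDiff_exp_sub_exp_neg (by norm_num) one_pos).ne hdiff
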